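/- Let q̃ ∈ (1/4, 1/2). Then there exists a unique ρ ∈ (1/4, q̃) such that H_{2q̃}(2ρ) = H_{1/4}(q(ρ)), where q(·) is the function from the entropy balance equation. -/

import Mathlib

noncomputable def bernKL (q p : ℝ) : ℝ :=
  p * Real.log (p / q) + (1 - p) * Real.log ((1 - p) / (1 - q))

noncomputable def Hsym (q : ℝ) : ℝ :=
  -(2 * (q * Real.log q) + 2 * ((1/2 - q) * Real.log (1/2 - q)))

open Real Set

lemma bernKL_hasDerivAt {q p : ℝ} (hq0 : 0 < q) (hq1 : q < 1) (hp0 : 0 < p) (hp1 : p < 1) :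
    HasDerivAt (bernKL q) (Real.log (p / q) - Real.log ((1 - p) / (1 - q))) p := by
  have h1p : (0:ℝ) < 1 - p := by linarith
  have h1q : (0:ℝ) < 1 - q := by linarith
  have h1 : HasDerivAt (fun x : ℝ => x / q) (1 / q) p := by
    simpa using (hasDerivAt_id p).div_const q
  have h2 : HasDerivAt (fun x : ℝ => Real.log (x / q)) ((1 / q) / (p / q)) p :=
    h1.log (by positivity)
  have h3 : HasDerivAt (fun x : ℝ => x * Real.log (x / q))
      (1 * Real.log (p / q) + p * ((1 / q) / (p / q))) p :=
    (hasDerivAt_id p).mul h2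
  have h4 : HasDerivAt (fun x : ℝ => (1 - x) / (1 - q)) ((-1) / (1 - q)) p := by
    simpa using ((hasDerivAt_id p).const_sub 1).div_const (1 - q)
  have h5 : HasDerivAt (fun x : ℝ => Real.log ((1 - x) / (1 - q)))
      (((-1) / (1 - q)) / ((1 - p) / (1 - q))) p := h4.log (by positivity)
  have h6 : HasDerivAt (fun x : ℝ => (1 - x) * Real.log ((1 - x) / (1 - q)))
      ((-1) * Real.log ((1 - p) / (1 - q)) + (1 - p) * (((-1) / (1 - q)) / ((1 - p) / (1 - q)))) p :=
    ((hasDerivAt_id p).const_sub 1).mul h5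
  have := h3.add h6
  have heq : 1 * Real.log (p / q) + p * ((1 / q) / (p / q)) +
      ((-1) * Real.log ((1 - p) / (1 - q)) + (1 - p) * (((-1) / (1 - q)) / ((1 - p) / (1 - q))))
      = Real.log (p / q) - Real.log ((1 - p) / (1 - q)) := by
    field_simp
    ring
  rw [heq] at this
  exact this

lemma bernKL_self {q : ℝ} (hq0 : 0 < q) (hq1 : q < 1) : bernKL q q = 0 := by
  unfold bernKL
  rw [div_self (ne_of_gt hq0), div_self (by linarith : (1:ℝ) - q ≠ 0), Real.log_one]
  ring

lemma bernKL_continuousOn {q : ℝ} (hq0 : 0 < q) (hq1 : q < 1) :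
    ContinuousOn (bernKL q) (Ioo 0 1) := fun p hp =>
  (bernKL_hasDerivAt hq0 hq1 hp.1 hp.2).continuousAt.continuousWithinAt

lemma bernKL_strictAntiOn {q : ℝ} (hq0 : 0 < q) (hq1 : q < 1) :
    StrictAntiOn (bernKL q) (Ioc 0 q) := by
  apply strictAntiOn_of_deriv_neg (convex_Ioc 0 q)
  · exact (bernKL_continuousOn hq0 hq1).mono (fun x hx => ⟨hx.1, lt_of_le_of_lt hx.2 hq1⟩)
  · intro x hx
    rw [interior_Ioc] at hx
    obtain ⟨hxa, hxb⟩ := hx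
    have hx1 : x < 1 := lt_trans hxb hq1
    rw [(bernKL_hasDerivAt hq0 hq1 hxa hx1).deriv]
    have l1 : Real.log (x / q) < 0 :=
      Real.log_neg (div_pos hxa hq0) ((div_lt_one hq0).2 hxb)
    have l2 : 0 < Real.log ((1 - x) / (1 - q)) :=
      Real.log_pos ((one_lt_div (by linarith)).2 (by linarith))
    linarith

lemma bernKL_strictMonoOn {q : ℝ} (hq0 : 0 < q) (hq1 : q < 1) :
    StrictMonoOn (bernKL q) (Ico q 1) := by
  apply strictMonoOn_of_deriv_pos (convex_Ico q 1)
  · exact (bernKL_continuousOn hq0 hq1).mono (fun x hx => ⟨lt_of_lt_of_le hq0 hx.1, hx.2⟩)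
  · intro x hx
    rw [interior_Ico] at hx
    obtain ⟨hxa, hxb⟩ := hx
    have hx0 : 0 < x := lt_trans hq0 hxa
    rw [(bernKL_hasDerivAt hq0 hq1 hx0 hxb).deriv]
    have l1 : 0 < Real.log (x / q) :=
      Real.log_pos ((one_lt_div hq0).2 hxa)
    have l2 : Real.log ((1 - x) / (1 - q)) < 0 :=
      Real.log_neg (div_pos (by linarith) (by linarith)) ((div_lt_one (by linarith)).2 (by linarith))
    linarith

lemma Hsym_continuous : Continuous Hsym := by
  unfold Hsym
  have h1 : Continuous fun q : ℝ => q * Real.log q := Real.continuous_mul_log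
  have h2 : Continuous fun q : ℝ => (1/2 - q) * Real.log (1/2 - q) :=
    Real.continuous_mul_log.comp (by continuity)
  continuity

lemma Hsym_hasDerivAt {q : ℝ} (hq0 : 0 < q) (hq1 : q < 1/2) :
    HasDerivAt Hsym (2 * (Real.log (1/2 - q) - Real.log q)) q := by
  have hA : HasDerivAt (fun x : ℝ => x * Real.log x) (Real.log q + 1) q :=
    Real.hasDerivAt_mul_log (ne_of_gt hq0)
  have hinner : HasDerivAt (fun x : ℝ => 1/2 - x) (-1) q := by
    simpa using (hasDerivAt_id q).const_sub (1/2 : ℝ)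
  have hB : HasDerivAt (fun x : ℝ => (1/2 - x) * Real.log (1/2 - x))
      ((Real.log (1/2 - q) + 1) * (-1)) q :=
    (Real.hasDerivAt_mul_log (by linarith : (1:ℝ)/2 - q ≠ 0)).comp q hinner
  have := (((hA.const_mul 2).add (hB.const_mul 2)).neg)
  have heq : -(2 * (Real.log q + 1) + 2 * ((Real.log (1/2 - q) + 1) * (-1)))
      = 2 * (Real.log (1/2 - q) - Real.log q) := by ring
  rw [heq] at this
  exact this

lemma Hsym_strictAntiOn : StrictAntiOn Hsym (Icc (1/4 : ℝ) (1/2)) := by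
  apply strictAntiOn_of_deriv_neg (convex_Icc _ _) Hsym_continuous.continuousOn
  intro x hx
  rw [interior_Icc] at hx
  rw [(Hsym_hasDerivAt (by linarith [hx.1] : (0:ℝ) < x) hx.2).deriv]
  have : Real.log (1/2 - x) < Real.log x :=
    Real.log_lt_log (by linarith [hx.2]) (by linarith [hx.1])
  linarith

theorem stmt_8 (qt : ℝ) (hqt : qt ∈ Set.Ioo (1/4 : ℝ) (1/2)) (f : ℝ → ℝ)
    (hf : ∀ p ∈ Set.Ioo (1/4 : ℝ) (1/2),
      f p ∈ Set.Ioo (1/4 : ℝ) p ∧ Hsym p - 2 * Hsym (f p) + Real.log 4 = 0) :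
    ∃! ρ, ρ ∈ Set.Ioo (1/4 : ℝ) qt ∧ bernKL (2 * qt) (2 * ρ) = bernKL (1/4) (f ρ) := by
  obtain ⟨hqt1, hqt2⟩ := hqt
  set s : Set ℝ := Ioo (1/4 : ℝ) (1/2) with hs
  -- basic facts about f
  have hfs : ∀ p ∈ s, f p ∈ s := by
    intro p hp
    exact ⟨(hf p hp).1.1, lt_trans (hf p hp).1.2 hp.2⟩
  have hfeq : ∀ p ∈ s, Hsym (f p) = (Hsym p + Real.log 4) / 2 := by
    intro p hp
    have := (hf p hp).2
    linarith
  -- f is strictly monotone on s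
  have hfmono : StrictMonoOn f s := by
    intro p1 hp1 p2 hp2 h12
    by_contra hle
    push_neg at hle
    have K1 : f p1 ∈ Icc (1/4:ℝ) (1/2) := Ioo_subset_Icc_self (hfs p1 hp1)
    have K2 : f p2 ∈ Icc (1/4:ℝ) (1/2) := Ioo_subset_Icc_self (hfs p2 hp2)
    have hH : Hsym p2 < Hsym p1 :=
      Hsym_strictAntiOn (Ioo_subset_Icc_self hp1) (Ioo_subset_Icc_self hp2) h12
    have hH2 : Hsym (f p2) < Hsym (f p1) := by
      rw [hfeq p1 hp1, hfeq p2 hp2]; linarith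
    rcases lt_or_eq_of_le hle with h | h
    · exact absurd (Hsym_strictAntiOn K2 K1 h) (by linarith)
    · rw [h] at hH2; linarith
  -- continuity of f on s via inverse of Hsym on compact interval
  have hfcont : ContinuousOn f s := by
    set K : Set ℝ := Icc (1/4:ℝ) (1/2) with hK
    have hKinj : InjOn Hsym K := Hsym_strictAntiOn.injOn
    let E : K ≃ (Hsym '' K) := Equiv.ofBijective
      (fun x => ⟨Hsym x.1, mem_image_of_mem _ x.2⟩)
      (by
        constructor
        · intro a b hab
          exact Subtype.ext (hKinj a.2 b.2 (congrArg Subtype.val hab))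
        · rintro ⟨y, x, hx, rfl⟩
          exact ⟨⟨x, hx⟩, rfl⟩)
    have hEcont : Continuous E :=
      Continuous.subtype_mk (Hsym_continuous.comp continuous_subtype_val) _
    let homeo : K ≃ₜ (Hsym '' K) := hEcont.homeoOfEquivCompactToT2
    have hfval : ∀ x : s, f x.1 =
        (homeo.symm ⟨Hsym (f x.1), mem_image_of_mem _ (Ioo_subset_Icc_self (hfs x.1 x.2))⟩ : K).1 := by
      intro x
      have : homeo ⟨f x.1, Ioo_subset_Icc_self (hfs x.1 x.2)⟩ =
          ⟨Hsym (f x.1), mem_image_of_mem _ (Ioo_subset_Icc_self (hfs x.1 x.2))⟩ := rfl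
      rw [← this, Homeomorph.symm_apply_apply]
    rw [continuousOn_iff_continuous_restrict]
    have : s.domRestrict f = fun x : s =>
        (homeo.symm ⟨Hsym (f x.1), mem_image_of_mem _ (Ioo_subset_Icc_self (hfs x.1 x.2))⟩ : K).1 := by
      funext x
      exact hfval x
    rw [this]
    apply continuous_subtype_val.comp
    apply homeo.symm.continuous.comp
    apply Continuous.subtype_mk
    have : (fun x : s => Hsym (f x.1)) = fun x : s => (Hsym x.1 + Real.log 4) / 2 := by
      funext x
      exact hfeq x.1 x.2
    rw [this]
    exact ((Hsym_continuous.comp continuous_subtype_val).add continuous_const).div_const 2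
  -- the function G
  set A : ℝ → ℝ := fun ρ => bernKL (2 * qt) (2 * ρ) with hA
  set B : ℝ → ℝ := fun ρ => bernKL (1/4) (f ρ) with hB
  set G : ℝ → ℝ := fun ρ => A ρ - B ρ with hG
  have h2qt0 : (0:ℝ) < 2 * qt := by linarith
  have h2qt1 : 2 * qt < 1 := by linarith
  have hq40 : (0:ℝ) < 1/4 := by norm_num
  have hq41 : (1:ℝ)/4 < 1 := by norm_num
  -- A strictly anti on Ioc (1/4) qt ∪ endpoints; use membership facts
  have hAmem : ∀ ρ, 1/4 < ρ → ρ ≤ qt → 2 * ρ ∈ Ioc (0:ℝ) (2 * qt) := by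
    intro ρ h1 h2; exact ⟨by linarith, by linarith⟩
  have hAanti : ∀ ρ1 ρ2, 1/4 < ρ1 → ρ1 < ρ2 → ρ2 ≤ qt → A ρ2 < A ρ1 := by
    intro ρ1 ρ2 h1 h2 h3
    exact bernKL_strictAntiOn h2qt0 h2qt1 (hAmem ρ1 h1 (by linarith)) (hAmem ρ2 (by linarith) h3)
      (by linarith)
  have hApos : ∀ ρ, 1/4 < ρ → ρ < qt → 0 < A ρ := by
    intro ρ h1 h2
    have := bernKL_strictAntiOn h2qt0 h2qt1 (hAmem ρ h1 (le_of_lt h2))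
      (hAmem qt (by linarith) le_rfl) (by linarith)
    rwa [show bernKL (2*qt) (2*qt) = 0 from bernKL_self h2qt0 h2qt1] at this
  -- B strictly mono on s
  have hBmem : ∀ p ∈ s, f p ∈ Ico (1/4:ℝ) 1 := by
    intro p hp
    exact ⟨le_of_lt (hfs p hp).1, lt_trans (hfs p hp).2 (by norm_num)⟩
  have hBmono : ∀ ρ1 ∈ s, ∀ ρ2 ∈ s, ρ1 < ρ2 → B ρ1 < B ρ2 := by
    intro ρ1 h1 ρ2 h2 h12
    exact bernKL_strictMonoOn hq40 hq41 (hBmem ρ1 h1) (hBmem ρ2 h2) (hfmono h1 h2 h12)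
  have hBpos : ∀ ρ ∈ s, 0 < B ρ := by
    intro ρ hρ
    have := bernKL_strictMonoOn hq40 hq41 (by norm_num : (1:ℝ)/4 ∈ Ico (1/4:ℝ) 1)
      (hBmem ρ hρ) (hfs ρ hρ).1
    rwa [show bernKL (1/4) (1/4) = 0 from bernKL_self hq40 hq41] at this
  have hBle : ∀ ρ ∈ s, B ρ < bernKL (1/4) ρ := by
    intro ρ hρ
    exact bernKL_strictMonoOn hq40 hq41 (hBmem ρ hρ)
      ⟨le_of_lt hρ.1, lt_trans hρ.2 (by norm_num)⟩ (hf ρ hρ).1.2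
  -- subset fact
  have hsub : Ioo (1/4:ℝ) qt ⊆ s := fun x hx => ⟨hx.1, lt_trans hx.2 hqt2⟩
  -- G strictly anti on Ioo (1/4) qt
  have hGanti : StrictAntiOn G (Ioo (1/4:ℝ) qt) := by
    intro ρ1 h1 ρ2 h2 h12
    have := hAanti ρ1 ρ2 h1.1 h12 (le_of_lt h2.2)
    have := hBmono ρ1 (hsub h1) ρ2 (hsub h2) h12
    simp only [hG]
    linarith
  -- choose a₀
  set a₀ : ℝ := (1/4 + qt) / 2 with ha₀
  have ha₀mem : a₀ ∈ Ioo (1/4:ℝ) qt := ⟨by simp only [ha₀]; linarith, by simp only [ha₀]; linarith⟩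
  have hc' : 0 < A a₀ := hApos a₀ ha₀mem.1 ha₀mem.2
  -- find a near 1/4 with G a > 0
  have hcontB14 : ContinuousAt (bernKL (1/4)) (1/4) := by
    have := bernKL_continuousOn hq40 hq41
    exact this.continuousAt (isOpen_Ioo.mem_nhds (by norm_num))
  have hev1 : ∀ᶠ x in nhdsWithin (1/4:ℝ) (Ioi (1/4)), bernKL (1/4) x < A a₀ := by
    have : Filter.Tendsto (bernKL (1/4)) (nhdsWithin (1/4:ℝ) (Ioi (1/4))) (nhds (bernKL (1/4) (1/4))) :=
      hcontB14.continuousWithinAt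
    rw [show bernKL (1/4) (1/4) = 0 from bernKL_self hq40 hq41] at this
    exact this.eventually (Filter.Tendsto.eventually_lt_const hc' Filter.tendsto_id)
  have hev2 : ∀ᶠ x in nhdsWithin (1/4:ℝ) (Ioi (1/4)), x ∈ Ioo (1/4:ℝ) a₀ :=
    Ioo_mem_nhdsGT_of_mem ⟨le_rfl, ha₀mem.1⟩
  obtain ⟨a, haB, haI⟩ := (hev1.and hev2).exists
  have haGpos : 0 < G a := by
    have h1 : B a < bernKL (1/4) a := hBle a (hsub ⟨haI.1, lt_trans haI.2 ha₀mem.2⟩)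
    have h2 : A a₀ < A a := hAanti a a₀ haI.1 haI.2 (le_of_lt ha₀mem.2)
    simp only [hG]
    linarith
  -- find b near qt with G b < 0
  have hcB : 0 < B a₀ := hBpos a₀ (hsub ha₀mem)
  have hcontAqt : ContinuousAt A qt := by
    have h1 : ContinuousAt (bernKL (2*qt)) (2*qt) :=
      (bernKL_continuousOn h2qt0 h2qt1).continuousAt (isOpen_Ioo.mem_nhds ⟨h2qt0, h2qt1⟩)
    exact h1.comp (by fun_prop)
  have hev3 : ∀ᶠ x in nhdsWithin qt (Iio qt), A x < B a₀ := by
    have : Filter.Tendsto A (nhdsWithin qt (Iio qt)) (nhds (A qt)) :=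
      hcontAqt.continuousWithinAt
    rw [show A qt = 0 by simp only [hA]; exact bernKL_self h2qt0 h2qt1] at this
    exact this.eventually (Filter.Tendsto.eventually_lt_const hcB Filter.tendsto_id)
  have hev4 : ∀ᶠ x in nhdsWithin qt (Iio qt), x ∈ Ioo a₀ qt :=
    Ioo_mem_nhdsLT_of_mem ⟨ha₀mem.2, le_rfl⟩
  obtain ⟨b, hbA, hbI⟩ := (hev3.and hev4).exists
  have hbGneg : G b < 0 := by
    have h1 : B a₀ < B b := hBmono a₀ (hsub ha₀mem) b (hsub ⟨lt_trans ha₀mem.1 hbI.1, hbI.2⟩) hbI.1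
    simp only [hG]
    linarith
  have hab : a < b := lt_trans haI.2 hbI.1
  have habsub : Icc a b ⊆ Ioo (1/4:ℝ) qt := fun x hx => ⟨lt_of_lt_of_le haI.1 hx.1, lt_of_le_of_lt hx.2 hbI.2⟩
  -- continuity of G on Icc a b
  have hGcont : ContinuousOn G (Icc a b) := by
    have hAc : ContinuousOn A (Icc a b) := by
      intro x hx
      have hx' := habsub hx
      exact (((bernKL_continuousOn h2qt0 h2qt1).continuousAt
        (isOpen_Ioo.mem_nhds ⟨by linarith [hx'.1], by linarith [hx'.2, hqt2]⟩)).comp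
        (by fun_prop)).continuousWithinAt
    have hBc : ContinuousOn B (Icc a b) := by
      apply ContinuousOn.comp (bernKL_continuousOn hq40 hq41)
        (hfcont.mono (fun x hx => hsub (habsub hx)))
      intro x hx
      have := hfs x (hsub (habsub hx))
      exact ⟨by linarith [this.1], by linarith [this.2]⟩
    exact hAc.sub hBc
  -- IVT
  have h0mem : (0:ℝ) ∈ Icc (G b) (G a) := ⟨le_of_lt hbGneg, le_of_lt haGpos⟩
  obtain ⟨ρ, hρmem, hρeq⟩ := intermediate_value_Icc' (le_of_lt hab) hGcont h0mem
  refine ⟨ρ, ⟨habsub hρmem, by simp only [hG, hA, hB] at hρeq; linarith⟩, ?_⟩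
  rintro ρ' ⟨hρ'mem, hρ'eq⟩
  have hG' : G ρ' = 0 := by simp only [hG, hA, hB]; linarith
  exact hGanti.injOn hρ'mem (habsub hρmem) (by rw [hG', hρeq])
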